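/- Suppose α satisfies Ncond for the aggregated matching graph G_x=(V,ξ), and let (u,v) be a pair of distinct non-adjacent vertices of G_x with u≠x and v≠x. Let Ḡ_x and Ḡ_yz denote the graphs obtained from G_x and G_yz respectively by adding the edge (u,v). If a Braess paradox holds for G_x, i.e., Q(Ḡ_x, α) > Q(G_x, α), then a Braess paradox holds for the decomposition matching graph: Q(Ḡ_yz, β) > Q(G_yz, β). -/

import Mathlib

open Classical Finset

noncomputable section

def nbr {V : Type} [Fintype V] (G : SimpleGraph V) (S : Finset V) : Finset V :=
  Finset.univ.filter fun j => ∃ i ∈ S, G.Adj i j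

def aSum {V : Type} (α : V → ℝ) (S : Finset V) : ℝ := ∑ i ∈ S, α i

def IsIndep {V : Type} (G : SimpleGraph V) (I : Finset V) : Prop :=
  I.Nonempty ∧ ∀ i ∈ I, ∀ j ∈ I, ¬ G.Adj i j

def indepSets {V : Type} [Fintype V] (G : SimpleGraph V) : Finset (Finset V) :=
  Finset.univ.filter fun I => IsIndep G I

def Ncond {V : Type} [Fintype V] (G : SimpleGraph V) (α : V → ℝ) : Prop :=
  ∀ I ∈ indepSets G, aSum α I < aSum α (nbr G I)

def Tlist {V : Type} [Fintype V] [DecidableEq V] (G : SimpleGraph V) (α : V → ℝ) :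
    List V → Finset V → ℝ
  | [], _ => 1
  | i :: l, P =>
      α i / (aSum α (nbr G (insert i P)) - aSum α (insert i P)) * Tlist G α l (insert i P)

def Erat {V : Type} [Fintype V] [DecidableEq V] (G : SimpleGraph V) (α : V → ℝ) :
    List V → Finset V → ℝ
  | [], _ => 0
  | i :: l, P =>
      aSum α (nbr G (insert i P)) / (aSum α (nbr G (insert i P)) - aSum α (insert i P)) +
        Erat G α l (insert i P)

def TI {V : Type} [Fintype V] [DecidableEq V] (G : SimpleGraph V) (α : V → ℝ) (I : Finset V) : ℝ :=
  ∑ l ∈ I.toList.permutations.toFinset, Tlist G α l ∅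

def EI {V : Type} [Fintype V] [DecidableEq V] (G : SimpleGraph V) (α : V → ℝ) (I : Finset V) : ℝ :=
  ∑ l ∈ I.toList.permutations.toFinset, Erat G α l ∅ * Tlist G α l ∅

def meanQ {V : Type} [Fintype V] [DecidableEq V] (G : SimpleGraph V) (α : V → ℝ) : ℝ :=
  (1 + ∑ I ∈ indepSets G, TI G α I)⁻¹ * ∑ I ∈ indepSets G, EI G α I

def IsWord {V : Type} (G : SimpleGraph V) (w : List V) : Prop :=
  w.Pairwise fun a b => ¬ G.Adj a b

def piHatAux {V : Type} [Fintype V] [DecidableEq V] (G : SimpleGraph V) (α : V → ℝ) :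
    List V → Finset V → ℝ
  | [], _ => 1
  | i :: l, P => α i / aSum α (nbr G (insert i P)) * piHatAux G α l (insert i P)

def piHat {V : Type} [Fintype V] [DecidableEq V] (G : SimpleGraph V) (α : V → ℝ) (w : List V) : ℝ :=
  piHatAux G α w ∅

def addEdge {V : Type} (G : SimpleGraph V) (u v : V) : SimpleGraph V :=
  G ⊔ SimpleGraph.fromEdgeSet {s(u, v)}

end

def psiMap {V : Type} (x : V) : V ⊕ Unit → V := Sum.elim id fun _ => x

def Gyz {V : Type} (G : SimpleGraph V) (x : V) : SimpleGraph (V ⊕ Unit) :=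
  SimpleGraph.comap (psiMap x) G

noncomputable def betaArr {V : Type} [DecidableEq V] (α : V → ℝ) (x : V) (by_ bz : ℝ) :
    V ⊕ Unit → ℝ :=
  Sum.elim (fun v => if v = x then by_ else α v) fun _ => bz

/-!
Under `Ncond` every denominator `D I = |α_{E(I)}| - |α_I|` of an independent set is positive.
Removing the last vertex of an ordering shows that `T I = TI G α I` and `E I = EI G α I` satisfy
`T I · D I = ∑_{i ∈ I} α_i T (I \ {i})` and `E I · D I = |α_{E(I)}| T I + ∑_{i ∈ I} α_i E (I \ {i})`.

In `Gyz G x` the vertex `inl x` plays `y` and `inr ()` plays `z`, so every vertex set is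
`A.disjSum B` with `B = ∅` (no `z`) or `B = {()}`. An independent set `S ∌ x` of `G` gives
the single set `S.disjSum ∅` with the same terms. An independent set `insert x S` gives three
sets, in which `x` is replaced by `y`, by `z` or by both, with denominators `D + β_z`, `D + β_y`
and `D`. Adding their three recursions cancels the cross terms `β_z T_y` and `β_y T_z`, so by
induction on `S` their terms add up to the term of `insert x S`. Hence
`Q(G_yz, β) = Q(G_x, α)` whenever `Ncond G α` holds. Adding the edge `(u, v)` commutes with
the decomposition and preserves `Ncond` (the arrival rates are positive), so the Braess
inequality carries over.
-/

noncomputable def excess {V : Type} [Fintype V] (G : SimpleGraph V) (α : V → ℝ)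
    (S : Finset V) : ℝ :=
  aSum α (nbr G S) - aSum α S

def SolvesRecursion {V : Type} [Fintype V] [DecidableEq V] (G : SimpleGraph V) (α : V → ℝ)
    (f F : Finset V → ℝ) : Prop :=
  ∀ I : Finset V, I.Nonempty → F I = (f I + ∑ i ∈ I, α i * F (I.erase i)) / excess G α I

section Ncond

variable {V : Type} {G H : SimpleGraph V} {α : V → ℝ}

lemma aSum_insert [DecidableEq V] {x : V} {S : Finset V} (hx : x ∉ S) :
    aSum α (insert x S) = α x + aSum α S :=
  Finset.sum_insert hx

lemma IsIndep.mono {I J : Finset V} (hI : IsIndep G I) (hJ : J ⊆ I) (hne : J.Nonempty) :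
    IsIndep G J :=
  ⟨hne, fun i hi j hj => hI.2 i (hJ hi) j (hJ hj)⟩

variable [Fintype V]

lemma Ncond.excess_pos (hN : Ncond G α) {I : Finset V} (hI : IsIndep G I) :
    0 < excess G α I :=
  sub_pos.2 (hN I (by simpa [indepSets] using hI))

lemma Ncond.mono (hα : ∀ i, 0 ≤ α i) (hGH : G ≤ H) (hN : Ncond G α) : Ncond H α := by
  intro I hI
  simp only [indepSets, Finset.mem_filter, Finset.mem_univ, true_and] at hI
  have hIG : IsIndep G I := ⟨hI.1, fun i hi j hj h => hI.2 i hi j hj (hGH h)⟩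
  refine (hN I (by simpa [indepSets] using hIG)).trans_le ?_
  refine Finset.sum_le_sum_of_subset_of_nonneg (fun j => ?_) fun i _ _ => hα i
  simp only [nbr, Finset.mem_filter, Finset.mem_univ, true_and]
  exact fun ⟨i, hi, h⟩ => ⟨i, hi, hGH h⟩

end Ncond

section Comap

variable {V W : Type} [DecidableEq V] (G : SimpleGraph V) (f : W → V)

lemma isIndep_comap_iff {J : Finset W} : IsIndep (G.comap f) J ↔ IsIndep G (J.image f) := by
  simp [IsIndep]

variable [Fintype W]

lemma aSum_preimage {α : V → ℝ} {β : W → ℝ} (hβ : ∀ v, ∑ w with f w = v, β w = α v)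
    (T : Finset V) : aSum β ({w | f w ∈ T} : Finset W) = aSum α T := by
  rw [aSum, aSum, ← Finset.sum_fiberwise_of_maps_to (g := f) (t := T) (by simp)]
  refine Finset.sum_congr rfl fun v hv => ?_
  rw [← hβ v, Finset.filter_filter]
  congr 1
  ext w
  simp only [Finset.mem_filter, Finset.mem_univ, true_and]
  grind

variable [Fintype V]

lemma aSum_nbr_comap {α : V → ℝ} {β : W → ℝ} (hβ : ∀ v, ∑ w with f w = v, β w = α v)
    (J : Finset W) : aSum β (nbr (G.comap f) J) = aSum α (nbr G (J.image f)) := by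
  rw [← aSum_preimage f hβ]
  congr 1
  ext w
  simp [nbr]

end Comap

section Permutations

variable {V : Type} [DecidableEq V]

lemma mem_permutations_toList {I : Finset V} {l : List V} :
    l ∈ I.toList.permutations.toFinset ↔ l.Nodup ∧ l.toFinset = I := by
  rw [List.mem_toFinset, List.mem_permutations]
  refine ⟨fun h => ⟨h.nodup_iff.2 I.nodup_toList, ?_⟩, fun ⟨hl, hI⟩ => ?_⟩
  · simpa using List.toFinset_eq_of_perm _ _ h
  · exact List.perm_of_nodup_nodup_toFinset_eq hl I.nodup_toList (by simp [hI])

lemma nodup_concat_and_toFinset_eq_iff {I : Finset V} {l : List V} {i : V} :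
    ((l ++ [i]).Nodup ∧ (l ++ [i]).toFinset = I) ↔ i ∈ I ∧ l.Nodup ∧ l.toFinset = I.erase i := by
  rw [List.nodup_append_comm, List.singleton_append, List.nodup_cons, List.toFinset_append,
    List.toFinset_cons, List.toFinset_nil, insert_empty_eq, Finset.union_singleton,
    ← List.mem_toFinset]
  constructor
  · rintro ⟨⟨hi, hl⟩, rfl⟩
    exact ⟨Finset.mem_insert_self _ _, hl, (Finset.erase_insert hi).symm⟩
  · rintro ⟨hi, hl, hlI⟩
    rw [hlI, Finset.insert_erase hi]
    exact ⟨⟨by simp, hl⟩, rfl⟩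

lemma sum_permutations_toList_eq_sum_concat {I : Finset V} (hI : I.Nonempty) (f : List V → ℝ) :
    ∑ l ∈ I.toList.permutations.toFinset, f l =
      ∑ i ∈ I, ∑ l ∈ (I.erase i).toList.permutations.toFinset, f (l ++ [i]) := by
  rw [Finset.sum_sigma']
  refine (Finset.sum_bij (fun p _ => p.2 ++ [p.1]) ?_ ?_ ?_ fun _ _ => rfl).symm
  · rintro ⟨i, l⟩
    simpa only [Finset.mem_sigma, mem_permutations_toList] using
      nodup_concat_and_toFinset_eq_iff.2
  · rintro ⟨i, l⟩ - ⟨i', l'⟩ -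
    simp only [List.append_singleton_inj, Sigma.mk.injEq, heq_eq_eq]
    exact And.symm
  · simp only [Finset.mem_sigma, mem_permutations_toList]
    rintro l hl
    obtain rfl | ⟨l', i, rfl⟩ := l.eq_nil_or_concat
    · simp [← hl.2] at hI
    · rw [List.concat_eq_append] at hl ⊢
      exact ⟨⟨i, l'⟩, nodup_concat_and_toFinset_eq_iff.1 hl, rfl⟩

end Permutations

section Orderings

variable {V : Type} [Fintype V] [DecidableEq V] (G : SimpleGraph V) (α : V → ℝ)

lemma Tlist_concat (i : V) (l : List V) (P : Finset V) :
    Tlist G α (l ++ [i]) P = Tlist G α l P * (α i / excess G α (insert i (P ∪ l.toFinset))) := by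
  induction l generalizing P with
  | nil => simp [Tlist, excess]
  | cons j l ih => simp only [List.cons_append, Tlist, ih, List.toFinset_cons]; grind

lemma Erat_concat (i : V) (l : List V) (P : Finset V) :
    Erat G α (l ++ [i]) P = Erat G α l P +
      aSum α (nbr G (insert i (P ∪ l.toFinset))) / excess G α (insert i (P ∪ l.toFinset)) := by
  induction l generalizing P with
  | nil => simp [Erat, excess]
  | cons j l ih => simp only [List.cons_append, Erat, ih, List.toFinset_cons]; grind

lemma TI_empty : TI G α ∅ = 1 := by
  simp [TI, Tlist]

lemma EI_empty : EI G α ∅ = 0 := by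
  simp [EI, Erat]

lemma TI_solvesRecursion : SolvesRecursion G α 0 (TI G α) := by
  intro I hI
  rw [TI, sum_permutations_toList_eq_sum_concat hI, Pi.zero_apply, zero_add, Finset.sum_div]
  refine Finset.sum_congr rfl fun i hi => ?_
  rw [TI, Finset.mul_sum, Finset.sum_div]
  refine Finset.sum_congr rfl fun l hl => ?_
  rw [Tlist_concat, Finset.empty_union, (mem_permutations_toList.1 hl).2, Finset.insert_erase hi]
  ring

lemma EI_solvesRecursion :
    SolvesRecursion G α (fun I => aSum α (nbr G I) * TI G α I) (EI G α) := by
  intro I hI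
  have hT := TI_solvesRecursion G α I hI
  rw [Pi.zero_apply, zero_add] at hT
  set N := aSum α (nbr G I)
  set D := excess G α I
  calc EI G α I
      = ∑ i ∈ I, (α i * EI G α (I.erase i) + N * (α i * TI G α (I.erase i) / D)) / D := by
        rw [EI, sum_permutations_toList_eq_sum_concat hI]
        refine Finset.sum_congr rfl fun i hi => ?_
        rw [EI, TI, Finset.mul_sum, Finset.mul_sum, Finset.sum_div, Finset.mul_sum,
          ← Finset.sum_add_distrib, Finset.sum_div]
        refine Finset.sum_congr rfl fun l hl => ?_
        rw [Tlist_concat, Erat_concat, Finset.empty_union, (mem_permutations_toList.1 hl).2,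
          Finset.insert_erase hi]
        ring
    _ = (N * TI G α I + ∑ i ∈ I, α i * EI G α (I.erase i)) / D := by
        rw [← Finset.sum_div, Finset.sum_add_distrib, ← Finset.mul_sum, ← Finset.sum_div, hT,
          add_comm]

end Orderings

section Decomposition

variable {V : Type} [DecidableEq V] {G : SimpleGraph V} {α : V → ℝ} {x : V} {by_ bz : ℝ}

lemma betaArr_inl_self : betaArr α x by_ bz (.inl x) = by_ := by
  simp [betaArr]

lemma betaArr_inl_of_ne {i : V} (hi : i ≠ x) : betaArr α x by_ bz (.inl i) = α i := by
  simp [betaArr, hi]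

lemma image_psiMap_disjSum_empty (A : Finset V) : (A.disjSum ∅).image (psiMap x) = A := by
  ext v; simp [psiMap]

lemma image_psiMap_disjSum_unit (A : Finset V) :
    (A.disjSum {()}).image (psiMap x) = insert x A := by
  ext v; simp [psiMap, Finset.mem_disjSum, or_comm, eq_comm]

lemma aSum_betaArr_disjSum (A : Finset V) (B : Finset Unit) :
    aSum (betaArr α x by_ bz) (A.disjSum B) = ∑ a ∈ A, betaArr α x by_ bz (.inl a) + #B * bz := by
  simp [aSum, Finset.sum_disjSum, betaArr]

lemma sum_betaArr_inl {S : Finset V} (hx : x ∉ S) :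
    ∑ a ∈ S, betaArr α x by_ bz (.inl a) = aSum α S :=
  Finset.sum_congr rfl fun _ ha => betaArr_inl_of_ne (ne_of_mem_of_not_mem ha hx)

omit [DecidableEq V] in
lemma sum_disjSum_erase {W U : Type} [DecidableEq W] [DecidableEq U] (A : Finset W)
    (B : Finset U) (c : W ⊕ U → ℝ) (g : Finset (W ⊕ U) → ℝ) :
    ∑ w ∈ A.disjSum B, c w * g ((A.disjSum B).erase w) =
      ∑ a ∈ A, c (.inl a) * g ((A.erase a).disjSum B) +
        ∑ b ∈ B, c (.inr b) * g (A.disjSum (B.erase b)) := by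
  rw [Finset.sum_disjSum]
  congr 1 <;> refine Finset.sum_congr rfl fun _ _ => ?_ <;> congr 2 <;> ext (_ | _) <;> simp

lemma sum_betaArr_disjSum_erase {S : Finset V} (hx : x ∉ S) (B : Finset Unit)
    (g : Finset (V ⊕ Unit) → ℝ) :
    ∑ w ∈ S.disjSum B, betaArr α x by_ bz w * g ((S.disjSum B).erase w) =
      ∑ i ∈ S, α i * g ((S.erase i).disjSum B) + bz * ∑ b ∈ B, g (S.disjSum (B.erase b)) := by
  rw [sum_disjSum_erase, Finset.mul_sum]
  congr 1
  exact Finset.sum_congr rfl fun i hi => by rw [betaArr_inl_of_ne (ne_of_mem_of_not_mem hi hx)]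

lemma sum_betaArr_insert_disjSum_erase {S : Finset V} (hx : x ∉ S) (B : Finset Unit)
    (g : Finset (V ⊕ Unit) → ℝ) :
    ∑ w ∈ (insert x S).disjSum B, betaArr α x by_ bz w * g (((insert x S).disjSum B).erase w) =
      by_ * g (S.disjSum B) + ∑ i ∈ S, α i * g ((insert x (S.erase i)).disjSum B) +
        bz * ∑ b ∈ B, g ((insert x S).disjSum (B.erase b)) := by
  rw [sum_disjSum_erase, Finset.mul_sum, Finset.sum_insert hx, Finset.erase_insert hx,
    betaArr_inl_self]
  congr 2
  refine Finset.sum_congr rfl fun i hi => ?_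
  have hix := ne_of_mem_of_not_mem hi hx
  rw [betaArr_inl_of_ne hix, Finset.erase_insert_of_ne hix.symm]

variable [Fintype V]

lemma sum_betaArr_fiber (hyz : by_ + bz = α x) (v : V) :
    ∑ w with psiMap x w = v, betaArr α x by_ bz w = α v := by
  rw [Finset.sum_filter, Fintype.sum_sum_type]
  -- restate the conditions `psiMap x (inl a) = v` as `a = v`, with matching `Decidable` instances
  show (∑ a : V, if a = v then betaArr α x by_ bz (.inl a) else 0) +
    ∑ _ : Unit, (if x = v then bz else 0) = α v
  rw [Fintype.sum_ite_eq']
  by_cases hv : v = x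
  · subst hv
    simp [betaArr, hyz]
  · simp [betaArr, hv, Ne.symm hv]

lemma aSum_nbr_Gyz (hyz : by_ + bz = α x) (J : Finset (V ⊕ Unit)) :
    aSum (betaArr α x by_ bz) (nbr (Gyz G x) J) = aSum α (nbr G (J.image (psiMap x))) :=
  aSum_nbr_comap G _ (sum_betaArr_fiber hyz) J

variable (hyz : by_ + bz = α x) {S : Finset V} (hx : x ∉ S)
include hyz hx

lemma excess_Gyz_disjSum_empty :
    excess (Gyz G x) (betaArr α x by_ bz) (S.disjSum ∅) = excess G α S := by
  rw [excess, excess, aSum_nbr_Gyz hyz, image_psiMap_disjSum_empty, aSum_betaArr_disjSum,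
    sum_betaArr_inl hx, Finset.card_empty, Nat.cast_zero, zero_mul, add_zero]

lemma excess_Gyz_insert_disjSum_empty :
    excess (Gyz G x) (betaArr α x by_ bz) ((insert x S).disjSum ∅) =
      excess G α (insert x S) + bz := by
  rw [excess, excess, aSum_nbr_Gyz hyz, image_psiMap_disjSum_empty, aSum_betaArr_disjSum,
    Finset.sum_insert hx, betaArr_inl_self, sum_betaArr_inl hx, aSum_insert hx,
    Finset.card_empty, Nat.cast_zero, zero_mul]
  linarith

lemma excess_Gyz_disjSum_unit :
    excess (Gyz G x) (betaArr α x by_ bz) (S.disjSum {()}) = excess G α (insert x S) + by_ := by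
  rw [excess, excess, aSum_nbr_Gyz hyz, image_psiMap_disjSum_unit, aSum_betaArr_disjSum,
    sum_betaArr_inl hx, aSum_insert hx, Finset.card_singleton, Nat.cast_one, one_mul]
  linarith

lemma excess_Gyz_insert_disjSum_unit :
    excess (Gyz G x) (betaArr α x by_ bz) ((insert x S).disjSum {()}) =
      excess G α (insert x S) := by
  rw [excess, excess, aSum_nbr_Gyz hyz, image_psiMap_disjSum_unit, Finset.insert_idem,
    aSum_betaArr_disjSum, Finset.sum_insert hx, betaArr_inl_self, sum_betaArr_inl hx,
    aSum_insert hx, Finset.card_singleton, Nat.cast_one, one_mul]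
  linarith

end Decomposition

section Split

variable {V : Type} [Fintype V] [DecidableEq V] {G : SimpleGraph V} {α : V → ℝ} {x : V}
  {by_ bz : ℝ} {f F : Finset V → ℝ} {f' F' : Finset (V ⊕ Unit) → ℝ}

lemma SolvesRecursion.lift_eq (hF : SolvesRecursion G α f F)
    (hF' : SolvesRecursion (Gyz G x) (betaArr α x by_ bz) f' F') (hyz : by_ + bz = α x)
    (h₀ : F' ∅ = F ∅) (hf : ∀ S, x ∉ S → f' (S.disjSum ∅) = f S) {S : Finset V} (hx : x ∉ S) :
    F' (S.disjSum ∅) = F S := by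
  induction S using Finset.strongInduction with
  | H S ih =>
    rcases S.eq_empty_or_nonempty with rfl | hS
    · simpa using h₀
    rw [hF' _ (by simpa using hS), hF S hS, sum_betaArr_disjSum_erase hx,
      excess_Gyz_disjSum_empty hyz hx, hf S hx, Finset.sum_empty, mul_zero, add_zero]
    congr 2
    refine Finset.sum_congr rfl fun i hi => ?_
    rw [ih _ (Finset.erase_ssubset hi) fun h => hx (Finset.mem_of_mem_erase h)]

lemma SolvesRecursion.split_eq (hF : SolvesRecursion G α f F)
    (hF' : SolvesRecursion (Gyz G x) (betaArr α x by_ bz) f' F') (hN : Ncond G α)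
    (hy : 0 < by_) (hz : 0 < bz) (hyz : by_ + bz = α x)
    (hlift : ∀ S, x ∉ S → F' (S.disjSum ∅) = F S)
    (hf : ∀ S, x ∉ S → IsIndep G (insert x S) →
      f' ((insert x S).disjSum ∅) + f' (S.disjSum {()}) + f' ((insert x S).disjSum {()}) =
        f (insert x S))
    {S : Finset V} (hx : x ∉ S) (hS : IsIndep G (insert x S)) :
    F' ((insert x S).disjSum ∅) + F' (S.disjSum {()}) + F' ((insert x S).disjSum {()}) =
      F (insert x S) := by
  induction S using Finset.strongInduction with
  | H S ih =>
    have hD := hN.excess_pos hS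
    have hY := hF' ((insert x S).disjSum ∅) ⟨.inl x, by simp⟩
    rw [sum_betaArr_insert_disjSum_erase hx, excess_Gyz_insert_disjSum_empty hyz hx,
      eq_div_iff (by positivity)] at hY
    have hZ := hF' (S.disjSum {()}) ⟨.inr (), by simp⟩
    rw [sum_betaArr_disjSum_erase hx, excess_Gyz_disjSum_unit hyz hx,
      eq_div_iff (by positivity)] at hZ
    have hYZ := hF' ((insert x S).disjSum {()}) ⟨.inr (), by simp⟩
    rw [sum_betaArr_insert_disjSum_erase hx, excess_Gyz_insert_disjSum_unit hyz hx,
      eq_div_iff hD.ne'] at hYZ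
    simp only [Finset.sum_empty, Finset.sum_singleton, Finset.erase_singleton, mul_zero,
      add_zero, hlift S hx] at hY hZ hYZ
    have hIH : ∑ i ∈ S, α i * F' ((insert x (S.erase i)).disjSum ∅) +
        ∑ i ∈ S, α i * F' ((S.erase i).disjSum {()}) +
        ∑ i ∈ S, α i * F' ((insert x (S.erase i)).disjSum {()}) =
        ∑ i ∈ S, α i * F ((insert x S).erase i) := by
      simp only [← Finset.sum_add_distrib, ← mul_add]
      refine Finset.sum_congr rfl fun i hi => ?_
      have hxi : x ∉ S.erase i := fun h => hx (Finset.mem_of_mem_erase h)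
      have hSi : IsIndep G (insert x (S.erase i)) := hS.mono
        (Finset.insert_subset_insert _ (Finset.erase_subset _ _)) (Finset.insert_nonempty _ _)
      rw [ih _ (Finset.erase_ssubset hi) hxi hSi,
        Finset.erase_insert_of_ne (ne_of_mem_of_not_mem hi hx).symm]
    rw [hF _ (Finset.insert_nonempty _ _), eq_div_iff hD.ne', Finset.sum_insert hx,
      Finset.erase_insert hx, ← hf S hx hS, ← hIH, ← hyz]
    linear_combination hY + hZ + hYZ

end Split

section IndepSets

variable {V : Type} [Fintype V] [DecidableEq V] {G : SimpleGraph V} {x : V}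

omit [DecidableEq V] in
lemma sum_finset_sum_unit (h : Finset (V ⊕ Unit) → ℝ) :
    ∑ J, h J = ∑ A : Finset V, (h (A.disjSum ∅) + h (A.disjSum {()})) := by
  rw [← Finset.sumEquiv.symm.toEquiv.sum_comp, Fintype.sum_prod_type]
  refine Finset.sum_congr rfl fun A _ => ?_
  rw [show (Finset.univ : Finset (Finset Unit)) = {∅, {()}} by decide, Finset.sum_pair (by decide)]
  rfl

lemma sum_finset_eq_sum_powerset_erase (x : V) (g : Finset V → ℝ) :
    ∑ A, g A = ∑ S ∈ (Finset.univ.erase x).powerset, (g S + g (insert x S)) := by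
  have := Finset.sum_powerset_insert (Finset.notMem_erase x Finset.univ) g
  rw [Finset.insert_erase (Finset.mem_univ x), Finset.powerset_univ] at this
  rw [this, Finset.sum_add_distrib]

lemma sum_indepSets_Gyz {F : Finset V → ℝ} {F' : Finset (V ⊕ Unit) → ℝ}
    (hlift : ∀ S, x ∉ S → F' (S.disjSum ∅) = F S)
    (hsplit : ∀ S, x ∉ S → IsIndep G (insert x S) →
      F' ((insert x S).disjSum ∅) + F' (S.disjSum {()}) + F' ((insert x S).disjSum {()}) =
        F (insert x S)) :
    ∑ J ∈ indepSets (Gyz G x), F' J = ∑ I ∈ indepSets G, F I := by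
  simp only [indepSets, Finset.sum_filter]
  rw [sum_finset_sum_unit, sum_finset_eq_sum_powerset_erase x,
    sum_finset_eq_sum_powerset_erase x]
  refine Finset.sum_congr rfl fun S hS => ?_
  have hx : x ∉ S := by simpa [Finset.subset_iff] using Finset.mem_powerset.1 hS
  simp only [Gyz, isIndep_comap_iff, image_psiMap_disjSum_empty, image_psiMap_disjSum_unit,
    Finset.insert_idem, hlift S hx]
  by_cases hS : IsIndep G (insert x S)
  · simp only [if_pos hS, ← hsplit S hx hS]
    ring
  · simp [hS]

end IndepSets

theorem meanQ_Gyz {V : Type} [Fintype V] [DecidableEq V] {G : SimpleGraph V} {α : V → ℝ}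
    {x : V} {by_ bz : ℝ} (hN : Ncond G α) (hy : 0 < by_) (hz : 0 < bz)
    (hyz : by_ + bz = α x) :
    meanQ (Gyz G x) (betaArr α x by_ bz) = meanQ G α := by
  have hT := TI_solvesRecursion G α
  have hT' := TI_solvesRecursion (Gyz G x) (betaArr α x by_ bz)
  have liftT : ∀ S, x ∉ S → TI (Gyz G x) (betaArr α x by_ bz) (S.disjSum ∅) = TI G α S :=
    fun S => hT.lift_eq hT' hyz (by rw [TI_empty, TI_empty]) fun _ _ => rfl
  have splitT := fun S => hT.split_eq hT' hN hy hz hyz liftT (S := S) fun _ _ _ => by simp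
  have hE := EI_solvesRecursion G α
  have hE' := EI_solvesRecursion (Gyz G x) (betaArr α x by_ bz)
  have liftE := fun S => hE.lift_eq hE' hyz (S := S) (by rw [EI_empty, EI_empty])
    fun S hx => by rw [aSum_nbr_Gyz hyz, image_psiMap_disjSum_empty, liftT S hx]
  have splitE := fun S => hE.split_eq hE' hN hy hz hyz liftE (S := S) fun S hx hS => by
    simp only [aSum_nbr_Gyz hyz, image_psiMap_disjSum_empty, image_psiMap_disjSum_unit,
      Finset.insert_idem, ← mul_add, splitT S hx hS]
  rw [meanQ, meanQ, sum_indepSets_Gyz liftT splitT, sum_indepSets_Gyz liftE splitE]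

lemma Gyz_addEdge {V : Type} (G : SimpleGraph V) {x u v : V} (hux : u ≠ x) (hvx : v ≠ x) :
    Gyz (addEdge G u v) x = addEdge (Gyz G x) (.inl u) (.inl v) := by
  ext (a | _) (b | _) <;> simp [Gyz, addEdge, psiMap, hux.symm, hvx.symm]

theorem stmt16 {V : Type} [Fintype V] [DecidableEq V] (G : SimpleGraph V) (α : V → ℝ)
    (hpos : ∀ i, 0 < α i) (hN : Ncond G α) (x : V) (by_ bz : ℝ)
    (hy : 0 < by_) (hz : 0 < bz) (hyz : by_ + bz = α x)
    (u v : V) (hux : u ≠ x) (hvx : v ≠ x)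
    (hpar : meanQ G α < meanQ (addEdge G u v) α) :
    meanQ (Gyz G x) (betaArr α x by_ bz) <
      meanQ (addEdge (Gyz G x) (Sum.inl u) (Sum.inl v)) (betaArr α x by_ bz) := by
  have hN' : Ncond (addEdge G u v) α := hN.mono (fun i => (hpos i).le) le_sup_left
  rwa [← Gyz_addEdge G hux hvx, meanQ_Gyz hN hy hz hyz, meanQ_Gyz hN' hy hz hyz]
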